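/- arXiv:2604.14217 — 3 statements merged into one kernel-verified Lean document; each statement's English description precedes it below -/
import Mathlib

section
/- Let M > 0, a ∈ [0,1], and let f be given by coefficient data with |a₀| = aM and |aₙ| + |bₙ| ≤ 4M/π for all n ≥ 1. Then for every r with 0 ≤ r ≤ (1-a)/(1-a+4/π), the majorant series M_f(r) = |a₀| + Σ_{n≥1} (|aₙ|+|bₙ|) rⁿ satisfies M_f(r) ≤ M. -/
open Complex

/-- Bohr inequality for bounded harmonic mappings: if `|a₀| = aM` and
`|aₙ| + |bₙ| ≤ 4M/π` for `n ≥ 1`, then the majorant series is at most `M`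
for `r ≤ (1-a)/(1-a+4/π)`. -/
theorem bohr_bounded_harmonic (M : ℝ) (hM : 0 < M) (a : ℝ) (ha0 : 0 ≤ a) (ha1 : a ≤ 1)
    (A B : ℕ → ℂ) (hA0 : ‖A 0‖ = a * M)
    (hAB : ∀ n : ℕ, 1 ≤ n → ‖A n‖ + ‖B n‖ ≤ 4 * M / Real.pi)
    (r : ℝ) (hr0 : 0 ≤ r) (hr : r ≤ (1 - a) / (1 - a + 4 / Real.pi)) :
    ‖A 0‖ +
      ∑' n : ℕ, (‖A (n + 1)‖ + ‖B (n + 1)‖) * r ^ (n + 1) ≤ M := by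
  have hpi : (0:ℝ) < Real.pi := Real.pi_pos
  have hc : 0 < 4 * M / Real.pi := by positivity
  have hD : 0 < 1 - a + 4 / Real.pi := by
    have : 0 < 4 / Real.pi := by positivity
    linarith
  have hr1 : r < 1 := by
    refine lt_of_le_of_lt hr ?_
    rw [div_lt_one hD]
    have : 0 < 4 / Real.pi := by positivity
    linarith
  have hrD : r * (1 - a + 4 / Real.pi) ≤ 1 - a := by
    rw [← le_div_iff₀ hD] at *
    exact hr
  have hgeo : Summable (fun n : ℕ => 4 * M / Real.pi * r ^ (n + 1)) := by
    apply Summable.mul_left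
    exact (summable_geometric_of_lt_one hr0 hr1).comp_injective (add_left_injective 1)
  have hle : ∀ n : ℕ, (‖A (n + 1)‖ + ‖B (n + 1)‖) * r ^ (n + 1)
      ≤ 4 * M / Real.pi * r ^ (n + 1) := fun n =>
    mul_le_mul_of_nonneg_right (hAB (n + 1) (Nat.le_add_left 1 n)) (pow_nonneg hr0 _)
  have hnn : ∀ n : ℕ, 0 ≤ (‖A (n + 1)‖ + ‖B (n + 1)‖) * r ^ (n + 1) :=
    fun n => mul_nonneg (by positivity) (pow_nonneg hr0 _)
  have hsum : Summable (fun n : ℕ =>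
      (‖A (n + 1)‖ + ‖B (n + 1)‖) * r ^ (n + 1)) :=
    Summable.of_nonneg_of_le hnn hle hgeo
  have h1 : ∑' n : ℕ, (‖A (n + 1)‖ + ‖B (n + 1)‖) * r ^ (n + 1)
      ≤ ∑' n : ℕ, 4 * M / Real.pi * r ^ (n + 1) := Summable.tsum_le_tsum hle hsum hgeo
  have h2 : ∑' n : ℕ, 4 * M / Real.pi * r ^ (n + 1) = 4 * M / Real.pi * r * (1 - r)⁻¹ := by
    have : ∀ n : ℕ, 4 * M / Real.pi * r ^ (n + 1) = 4 * M / Real.pi * r * r ^ n := by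
      intro n; ring
    simp_rw [this]
    rw [tsum_mul_left, tsum_geometric_of_lt_one hr0 hr1]
  rw [hA0]
  have hr1' : 0 < 1 - r := by linarith
  have key : 4 * M / Real.pi * r * (1 - r)⁻¹ ≤ (1 - a) * M := by
    rw [mul_inv_le_iff₀ hr1']
    have h4 : 4 / Real.pi * r ≤ (1 - a) * (1 - r) := by nlinarith
    have : 4 * M / Real.pi * r = (4 / Real.pi * r) * M := by ring
    rw [this]
    nlinarith
  nlinarith [h1, h2.le, h2.ge]
end

section
/- For any real a with 0 ≤ a < 1 and any r with (1-a)/(1-a+4/π) < r < 1, we have aM + (4M/π)·(r/(1-r)) > M for every M > 0. In particular the radius (1-a)/(1-a+4/π) in the Bohr inequality for bounded harmonic mappings is best possible. -/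
/-- Sharpness of the Bohr radius `(1-a)/(1-a+4/π)` for bounded harmonic mappings. -/
theorem bohr_bounded_harmonic_sharp (a : ℝ) (ha0 : 0 ≤ a) (ha1 : a < 1)
    (r : ℝ) (hr1 : (1 - a) / (1 - a + 4 / Real.pi) < r) (hr2 : r < 1)
    (M : ℝ) (hM : 0 < M) :
    a * M + (4 * M / Real.pi) * (r / (1 - r)) > M := by
  have hpi : (0:ℝ) < Real.pi := Real.pi_pos
  have hc : (0:ℝ) < 4 / Real.pi := by positivity
  have hden : (0:ℝ) < 1 - a + 4 / Real.pi := by linarith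
  have h1r : (0:ℝ) < 1 - r := by linarith
  have key : (1 - a) * (1 - r) < (4 / Real.pi) * r := by
    have := (div_lt_iff₀ hden).mp hr1
    nlinarith
  have h2 : (1 - a) < (4 / Real.pi) * (r / (1 - r)) := by
    rw [mul_div_assoc'] at *
    exact (lt_div_iff₀ h1r).mpr (by nlinarith)
  have h3 : (1-a)*M < (4/Real.pi*(r/(1-r)))*M := mul_lt_mul_of_pos_right h2 hM
  have h4 : 4*M/Real.pi*(r/(1-r)) = (4/Real.pi*(r/(1-r)))*M := by ring
  nlinarith [h3, h4]
end

section
/- Let K ≥ 0 and let f(z) = z + Σ_{n≥2} aₙzⁿ + conj(Σ_{n≥2} bₙzⁿ) be a harmonic mapping with |aₙ|+|bₙ| ≤ K for all n ≥ 2. If 0 < r < 1 satisfies K·(2r−r²)/(1-r)² < 1, then for any distinct z₁, z₂ with |z₁|, |z₂| ≤ r we have |f(z₁) − f(z₂)| ≥ |z₁ − z₂|·(1 − K·(2r−r²)/(1-r)²) > 0; in particular f is injective on the closed disk of radius r. -/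
open Complex

lemma pow_sub_pow_abs (z₁ z₂ : ℂ) (r : ℝ) (h1 : ‖z₁‖ ≤ r)
    (h2 : ‖z₂‖ ≤ r) (m : ℕ) :
    ‖z₁ ^ (m + 1) - z₂ ^ (m + 1)‖
      ≤ ((m : ℝ) + 1) * r ^ m * ‖z₁ - z₂‖ := by
  have hr0 : 0 ≤ r := le_trans (norm_nonneg _) h1
  rw [← geom_sum₂_mul, norm_mul]
  gcongr
  calc ‖∑ i ∈ Finset.range (m + 1), z₁ ^ i * z₂ ^ (m + 1 - 1 - i)‖
      ≤ ∑ i ∈ Finset.range (m + 1), ‖z₁ ^ i * z₂ ^ (m + 1 - 1 - i)‖ :=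
        norm_sum_le _ _
    _ ≤ ∑ _i ∈ Finset.range (m + 1), r ^ m := by
        apply Finset.sum_le_sum
        intro i hi
        rw [Finset.mem_range] at hi
        have hi' : i ≤ m := Nat.lt_succ_iff.mp hi
        rw [norm_mul, norm_pow, norm_pow]
        calc ‖z₁‖ ^ i * ‖z₂‖ ^ (m + 1 - 1 - i)
            ≤ r ^ i * r ^ (m + 1 - 1 - i) := by
              gcongr
          _ = r ^ m := by rw [← pow_add]; congr 1; omega
    _ = ((m : ℝ) + 1) * r ^ m := by
        rw [Finset.sum_const, Finset.card_range, nsmul_eq_mul]; push_cast; ring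

lemma series_val {r : ℝ} (hr0 : 0 < r) (hr1 : r < 1) :
    HasSum (fun n : ℕ => ((n : ℝ) + 2) * r ^ (n + 1))
      ((2 * r - r ^ 2) / (1 - r) ^ 2) := by
  have hr0' : (0:ℝ) ≤ r := hr0.le
  have hnorm : ‖r‖ < 1 := by rw [Real.norm_eq_abs, _root_.abs_of_nonneg hr0']; exact hr1
  have h1 : HasSum (fun n : ℕ => (n : ℝ) * r ^ n) (r / (1 - r) ^ 2) :=
    hasSum_coe_mul_geometric_of_norm_lt_one hnorm
  have h1' : HasSum (fun n : ℕ => ((n : ℝ) + 1) * r ^ (n + 1)) (r / (1 - r) ^ 2) := by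
    have h := (hasSum_nat_add_iff (f := fun n : ℕ => (n : ℝ) * r ^ n) 1).mpr (by simpa using h1)
    have he : (fun n : ℕ => ((n : ℝ) + 1) * r ^ (n + 1))
        = fun n : ℕ => ((n + 1 : ℕ) : ℝ) * r ^ (n + 1) := by
      funext n; push_cast; ring
    rw [he]; exact h
  have h2 : HasSum (fun n : ℕ => r ^ (n + 1)) (r * (1 - r)⁻¹) := by
    have h := (hasSum_geometric_of_lt_one hr0' hr1).mul_left r
    have he : (fun n : ℕ => r ^ (n + 1)) = fun n : ℕ => r * r ^ n := by
      funext n; ring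
    rw [he]; exact h
  have h3 := h1'.add h2
  have hne : (1 : ℝ) - r ≠ 0 := by intro h; linarith [h]
  have hfun : (fun n : ℕ => ((n : ℝ) + 2) * r ^ (n + 1))
      = fun n : ℕ => ((n : ℝ) + 1) * r ^ (n + 1) + r ^ (n + 1) := by
    funext n; ring
  have hval : (2 * r - r ^ 2) / (1 - r) ^ 2 = r / (1 - r) ^ 2 + r * (1 - r)⁻¹ := by
    field_simp; ring
  rw [hfun, hval]
  exact h3

lemma abs_sub_sub_le (x y w : ℂ) :
    ‖x‖ - ‖y‖ - ‖w‖ ≤ ‖x + y + w‖ := by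
  have h1 : ‖x‖ ≤ ‖x + y + w‖ + ‖y‖ + ‖w‖ := by
    calc ‖x‖ = ‖(x + y + w) + (-y) + (-w)‖ := by ring_nf
      _ ≤ ‖(x + y + w) + (-y)‖ + ‖-w‖ := norm_add_le _ _
      _ ≤ ‖x + y + w‖ + ‖-y‖ + ‖-w‖ := by
          linarith [norm_add_le (x + y + w) (-y)]
      _ = ‖x + y + w‖ + ‖y‖ + ‖w‖ := by
          rw [norm_neg, norm_neg]
  linarith

/-- Univalence part of the Landau-type theorem: if
`f(z) = z + Σ_{n≥2} aₙ zⁿ + conj(Σ_{n≥2} bₙ zⁿ)` with `|aₙ|+|bₙ| ≤ K` and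
`K(2r−r²)/(1-r)² < 1`, then `f` separates points of the closed disk of radius `r`. -/
theorem landau_univalence (K : ℝ) (hK : 0 ≤ K) (A B : ℕ → ℂ)
    (hAB : ∀ n : ℕ, 2 ≤ n → ‖A n‖ + ‖B n‖ ≤ K)
    (f : ℂ → ℂ)
    (hf : ∀ z : ℂ, ‖z‖ < 1 →
      f z = z + (∑' n : ℕ, A (n + 2) * z ^ (n + 2))
            + (starRingEnd ℂ) (∑' n : ℕ, B (n + 2) * z ^ (n + 2)))
    (r : ℝ) (hr0 : 0 < r) (hr1 : r < 1)
    (hcrit : K * (2 * r - r ^ 2) / (1 - r) ^ 2 < 1) :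
    (∀ z₁ z₂ : ℂ, ‖z₁‖ ≤ r → ‖z₂‖ ≤ r → z₁ ≠ z₂ →
      ‖f z₁ - f z₂‖
        ≥ ‖z₁ - z₂‖ * (1 - K * (2 * r - r ^ 2) / (1 - r) ^ 2) ∧
      0 < ‖f z₁ - f z₂‖) ∧
    Set.InjOn f (Metric.closedBall (0 : ℂ) r) := by
  have hKA : ∀ n : ℕ, ‖A (n + 2)‖ ≤ K := fun n => by
    have h := hAB (n + 2) (by omega)
    have := norm_nonneg (B (n + 2)); linarith
  have hKB : ∀ n : ℕ, ‖B (n + 2)‖ ≤ K := fun n => by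
    have h := hAB (n + 2) (by omega)
    have := norm_nonneg (A (n + 2)); linarith
  have hc := series_val hr0 hr1
  set c : ℝ := (2 * r - r ^ 2) / (1 - r) ^ 2 with hc_def
  have hc0 : 0 ≤ c := by
    apply div_nonneg
    · nlinarith
    · positivity
  have hcrit' : K * c < 1 := by rw [hc_def, ← mul_div_assoc]; exact hcrit
  have hgoal_eq : K * (2 * r - r ^ 2) / (1 - r) ^ 2 = K * c := by
    rw [hc_def, mul_div_assoc]
  have key : ∀ z₁ z₂ : ℂ, ‖z₁‖ ≤ r → ‖z₂‖ ≤ r → z₁ ≠ z₂ →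
      ‖f z₁ - f z₂‖ ≥ ‖z₁ - z₂‖ * (1 - K * c) ∧
      0 < ‖f z₁ - f z₂‖ := by
    intro z₁ z₂ h1 h2 hne
    set d : ℝ := ‖z₁ - z₂‖ with hd_def
    have hd0 : 0 < d := norm_pos_iff.mpr (sub_ne_zero.mpr hne)
    have hsum_geo : Summable (fun n : ℕ => K * r ^ (n + 2)) :=
      Summable.mul_left K
        ((summable_geometric_of_lt_one hr0.le hr1).comp_injective (add_left_injective 2))
    have hsumz : ∀ (C : ℕ → ℂ), (∀ n, ‖C (n + 2)‖ ≤ K) → ∀ (z : ℂ),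
        ‖z‖ ≤ r → Summable (fun n : ℕ => C (n + 2) * z ^ (n + 2)) := by
      intro C hC z hz
      apply Summable.of_norm
      apply Summable.of_nonneg_of_le (fun n => norm_nonneg _) _ hsum_geo
      intro n
      simp only [norm_mul, norm_pow]
      exact mul_le_mul (hC n)
        (pow_le_pow_left₀ (norm_nonneg z) hz _) (by positivity) hK
    have hsA1 := hsumz A hKA z₁ h1
    have hsA2 := hsumz A hKA z₂ h2
    have hsB1 := hsumz B hKB z₁ h1
    have hsB2 := hsumz B hKB z₂ h2
    -- pointwise bound on differences
    have hbnd : ∀ (C : ℕ → ℂ) (n : ℕ),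
        ‖C (n + 2) * z₁ ^ (n + 2) - C (n + 2) * z₂ ^ (n + 2)‖
          ≤ ‖C (n + 2)‖ * (((n : ℝ) + 2) * r ^ (n + 1) * d) := by
      intro C n
      rw [← mul_sub, norm_mul]
      gcongr
      have h := pow_sub_pow_abs z₁ z₂ r h1 h2 (n + 1)
      have he : ((n : ℝ) + 1 + 1) = ((n : ℝ) + 2) := by ring
      rw [show n + 1 + 1 = n + 2 from rfl] at h
      rw [← he, hd_def]
      convert h using 3
      · rfl
      push_cast
      ring
    have hbnd_sum : Summable (fun n : ℕ => K * (((n : ℝ) + 2) * r ^ (n + 1) * d)) :=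
      ((hc.mul_right d).mul_left K).summable
    have hdom : ∀ (C : ℕ → ℂ), (∀ n, ‖C (n + 2)‖ ≤ K) → ∀ n : ℕ,
        ‖C (n + 2)‖ * (((n : ℝ) + 2) * r ^ (n + 1) * d)
          ≤ K * (((n : ℝ) + 2) * r ^ (n + 1) * d) := by
      intro C hC n
      have hpos : (0:ℝ) ≤ ((n : ℝ) + 2) * r ^ (n + 1) * d := by positivity
      exact mul_le_mul_of_nonneg_right (hC n) hpos
    have hsumC : ∀ (C : ℕ → ℂ), (∀ n, ‖C (n + 2)‖ ≤ K) →
        Summable (fun n : ℕ =>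
          ‖C (n + 2)‖ * (((n : ℝ) + 2) * r ^ (n + 1) * d)) := by
      intro C hC
      exact Summable.of_nonneg_of_le (fun n => by positivity) (hdom C hC) hbnd_sum
    have habs : ∀ (C : ℕ → ℂ), (∀ n, ‖C (n + 2)‖ ≤ K) →
        ‖(∑' n : ℕ, C (n + 2) * z₁ ^ (n + 2))
            - ∑' n : ℕ, C (n + 2) * z₂ ^ (n + 2)‖
          ≤ ∑' n : ℕ, ‖C (n + 2)‖ * (((n : ℝ) + 2) * r ^ (n + 1) * d) := by
      intro C hC
      rw [← Summable.tsum_sub (hsumz C hC z₁ h1) (hsumz C hC z₂ h2)]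
      have hnormsum : Summable (fun n : ℕ =>
          ‖C (n + 2) * z₁ ^ (n + 2) - C (n + 2) * z₂ ^ (n + 2)‖) := by
        apply Summable.of_nonneg_of_le (fun n => norm_nonneg _) _ (hsumC C hC)
        intro n
        exact hbnd C n
      calc ‖∑' n : ℕ, (C (n + 2) * z₁ ^ (n + 2) - C (n + 2) * z₂ ^ (n + 2))‖
          ≤ ∑' n : ℕ, ‖C (n + 2) * z₁ ^ (n + 2) - C (n + 2) * z₂ ^ (n + 2)‖ :=
            norm_tsum_le_tsum_norm hnormsum
        _ ≤ ∑' n : ℕ, ‖C (n + 2)‖ * (((n : ℝ) + 2) * r ^ (n + 1) * d) :=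
            Summable.tsum_le_tsum (fun n => hbnd C n) hnormsum (hsumC C hC)
    have htot : (∑' n : ℕ, ‖A (n + 2)‖ * (((n : ℝ) + 2) * r ^ (n + 1) * d))
        + (∑' n : ℕ, ‖B (n + 2)‖ * (((n : ℝ) + 2) * r ^ (n + 1) * d))
        ≤ K * c * d := by
      rw [← Summable.tsum_add (hsumC A hKA) (hsumC B hKB)]
      have hval : (∑' n : ℕ, K * (((n : ℝ) + 2) * r ^ (n + 1) * d)) = K * (c * d) :=
        ((hc.mul_right d).mul_left K).tsum_eq
      calc (∑' n : ℕ, (‖A (n + 2)‖ * (((n : ℝ) + 2) * r ^ (n + 1) * d)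
              + ‖B (n + 2)‖ * (((n : ℝ) + 2) * r ^ (n + 1) * d)))
          ≤ ∑' n : ℕ, K * (((n : ℝ) + 2) * r ^ (n + 1) * d) := by
            apply Summable.tsum_le_tsum _ ((hsumC A hKA).add (hsumC B hKB)) hbnd_sum
            intro n
            have h := hAB (n + 2) (by omega)
            have hpos : (0:ℝ) ≤ ((n : ℝ) + 2) * r ^ (n + 1) * d := by positivity
            calc ‖A (n + 2)‖ * (((n : ℝ) + 2) * r ^ (n + 1) * d)
                  + ‖B (n + 2)‖ * (((n : ℝ) + 2) * r ^ (n + 1) * d)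
                = (‖A (n + 2)‖ + ‖B (n + 2)‖)
                    * (((n : ℝ) + 2) * r ^ (n + 1) * d) := by ring
              _ ≤ K * (((n : ℝ) + 2) * r ^ (n + 1) * d) :=
                  mul_le_mul_of_nonneg_right h hpos
        _ = K * c * d := by rw [hval]; ring
    have hz1 : ‖z₁‖ < 1 := lt_of_le_of_lt h1 hr1
    have hz2 : ‖z₂‖ < 1 := lt_of_le_of_lt h2 hr1
    set SA : ℂ := (∑' n : ℕ, A (n + 2) * z₁ ^ (n + 2))
        - ∑' n : ℕ, A (n + 2) * z₂ ^ (n + 2) with hSA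
    set SB : ℂ := (∑' n : ℕ, B (n + 2) * z₁ ^ (n + 2))
        - ∑' n : ℕ, B (n + 2) * z₂ ^ (n + 2) with hSB
    have hexp : f z₁ - f z₂ = (z₁ - z₂) + SA + (starRingEnd ℂ) SB := by
      rw [hf z₁ hz1, hf z₂ hz2, hSA, hSB, map_sub]
      ring
    have hmain : ‖f z₁ - f z₂‖ ≥ d * (1 - K * c) := by
      rw [hexp]
      have htri := abs_sub_sub_le (z₁ - z₂) SA ((starRingEnd ℂ) SB)
      have hconj : ‖(starRingEnd ℂ) SB‖ = ‖SB‖ :=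
        Complex.norm_conj SB
      have hA := habs A hKA
      have hB := habs B hKB
      rw [hconj] at htri
      rw [← hSA] at hA
      rw [← hSB] at hB
      have : d - K * c * d ≤ ‖(z₁ - z₂) + SA + (starRingEnd ℂ) SB‖ := by
        have hsum : ‖SA‖ + ‖SB‖ ≤ K * c * d := le_trans (add_le_add hA hB) htot
        calc d - K * c * d ≤ d - (‖SA‖ + ‖SB‖) := by linarith
          _ ≤ ‖(z₁ - z₂) + SA + (starRingEnd ℂ) SB‖ := by
              rw [hd_def]; linarith
      linarith [this]
    refine ⟨hmain, lt_of_lt_of_le ?_ hmain⟩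
    have h10 : 0 < 1 - K * c := by linarith
    positivity
  constructor
  · intro z₁ z₂ h1 h2 hne
    rw [hgoal_eq]
    exact key z₁ z₂ h1 h2 hne
  · intro z₁ hz₁ z₂ hz₂ hfe
    by_contra hne
    have h1 : ‖z₁‖ ≤ r := by
      simpa [Complex.dist_eq] using Metric.mem_closedBall.mp hz₁
    have h2 : ‖z₂‖ ≤ r := by
      simpa [Complex.dist_eq] using Metric.mem_closedBall.mp hz₂
    have h := (key z₁ z₂ h1 h2 hne).2
    rw [hfe, sub_self, norm_zero] at h
    exact lt_irrefl 0 h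
end
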